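/- arXiv:1403.7671 — 7 statements merged into one kernel-verified Lean document; each statement's English description precedes it below -/
import Mathlib

section
/- Let Γ be a group acting by homeomorphisms on a perfect, compact metric space Z. Suppose the action is a convergence action and is expanding at every point of Z. Then every point of Z is intrinsically conical. -/
open Filter Metric Set Topology

/-- A sequence in a group diverges to infinity if it eventually leaves every finite subset. -/
def DivergesToInfinity {G : Type*} (γ : ℕ → G) : Prop :=
  ∀ F : Finset G, {n : ℕ | γ n ∈ F}.Finite

/-- A convergence action: every sequence diverging to infinity has a subsequence converging,
uniformly on compact subsets of the complement of an exceptional point, to a constant map. -/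
def ConvergenceAction (G Z : Type*) [Group G] [MetricSpace Z] [MulAction G Z] : Prop :=
  ∀ γ : ℕ → G, DivergesToInfinity γ →
    ∃ (zp zm : Z) (k : ℕ → ℕ), StrictMono k ∧
      ∀ K : Set Z, IsCompact K → K ⊆ {zm}ᶜ →
        TendstoUniformlyOn (fun i z => γ (k i) • z) (fun _ => zp) atTop K

/-- The action is expanding at `z` if some group element is uniformly expanding on some
neighborhood of `z`, with expansion factor `c > 1`. -/
def ExpandingAt (G : Type*) {Z : Type*} [Group G] [MetricSpace Z] [MulAction G Z]
    (z : Z) : Prop :=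
  ∃ (γ : G) (U : Set Z) (c : ℝ), U ∈ 𝓝 z ∧ 1 < c ∧
    ∀ z₁ ∈ U, ∀ z₂ ∈ U, c * dist z₁ z₂ ≤ dist (γ • z₁) (γ • z₂)

/-- A point `z` is intrinsically conical if there is a sequence `γ n → ∞` in the group such
that `γ n⁻¹ • z` converges to some `a` and the maps `γ n⁻¹` converge, uniformly on compact
subsets of `Z ∖ {z}`, to a constant `b ≠ a`. -/
def IntrinsicallyConical (G : Type*) {Z : Type*} [Group G] [MetricSpace Z] [MulAction G Z]
    (z : Z) : Prop :=
  ∃ (γ : ℕ → G) (a b : Z), DivergesToInfinity γ ∧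
    Tendsto (fun n => (γ n)⁻¹ • z) atTop (𝓝 a) ∧
    (∀ K : Set Z, IsCompact K → K ⊆ {z}ᶜ →
      TendstoUniformlyOn (fun n w => (γ n)⁻¹ • w) (fun _ => b) atTop K) ∧
    b ≠ a

/-!
By compactness the local expansions can be chosen uniformly: there are `c > 1`, `δ > 0` and,
for every `w`, an element `g w` multiplying by at least `c` the distance from `w` of every point
that it sends into the `δ`-ball around `g w • w`. Iterating along the orbit `x₀ = z`,
`x_{k+1} = g x_k • x_k` gives elements `β n` with `β n • z = x n` such that `(β n)⁻¹` maps the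
`δ`-ball around `x n` into the `δ c⁻ⁿ`-ball around `z`. Since no point is isolated, this forces
`β n → ∞`. Along a subsequence on which `x n → a` and `(β n)⁻¹` has attracting point `p` and
repelling point `b`, shrinking the `δ`-balls around `x n` onto `z` gives `p = z`; hence `β n`
converges to `b` away from `z`, and `b ≠ a` because every `w ≠ z` is eventually pushed out of
the `δ`-ball around `x n`.
-/

lemma divergesToInfinity_of_eventually_ne {G : Type*} {γ : ℕ → G}
    (h : ∀ g, ∀ᶠ n in atTop, γ n ≠ g) : DivergesToInfinity γ := by
  intro F
  refine (F.finite_toSet.biUnion (t := fun g => {n | γ n = g}) fun g _ => ?_).subset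
    fun n hn => mem_iUnion₂.2 ⟨γ n, hn, rfl⟩
  simpa [← Nat.cofinite_eq_atTop] using h g

section TendstoConstAwayFrom

variable {G Z : Type*}

def TendstoConstAwayFrom [SMul G Z] [UniformSpace Z] (f : ℕ → G) (m p : Z) : Prop :=
  ∀ K : Set Z, IsCompact K → K ⊆ {m}ᶜ →
    TendstoUniformlyOn (fun i w => f i • w) (fun _ => p) atTop K

namespace TendstoConstAwayFrom

variable [SMul G Z] [UniformSpace Z] {f : ℕ → G} {m p : Z}

lemma tendsto (h : TendstoConstAwayFrom f m p) {w : Z} (hw : w ≠ m) :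
    Tendsto (fun i => f i • w) atTop (𝓝 p) :=
  (h {w} isCompact_singleton (singleton_subset_iff.2 hw)).tendsto_at rfl

lemma comp_tendsto (h : TendstoConstAwayFrom f m p) {φ : ℕ → ℕ} (hφ : Tendsto φ atTop atTop) :
    TendstoConstAwayFrom (fun i => f (φ i)) m p :=
  fun K hK hKm u hu => hφ.eventually (h K hK hKm u hu)

end TendstoConstAwayFrom

lemma TendstoConstAwayFrom.inv [Group G] [MetricSpace Z] [CompactSpace Z] [MulAction G Z]
    {f : ℕ → G} {m p : Z} (h : TendstoConstAwayFrom f m p) :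
    TendstoConstAwayFrom (fun i => (f i)⁻¹) p m := by
  intro K hK hKp
  obtain ⟨ρ, hρ, hρK⟩ := Metric.isOpen_iff.1 hK.isClosed.isOpen_compl p fun hp => hKp hp rfl
  rw [Metric.tendstoUniformlyOn_iff]
  intro ε hε
  have hfar : (ball m ε)ᶜ ⊆ {m}ᶜ := compl_subset_compl.2 (singleton_subset_iff.2 (mem_ball_self hε))
  filter_upwards [Metric.tendstoUniformlyOn_iff.1
    (h _ isOpen_ball.isClosed_compl.isCompact hfar) ρ hρ] with i hi w hw
  by_contra hwε
  have hpw := hi _ (by rwa [mem_compl_iff, mem_ball, dist_comm])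
  rw [smul_inv_smul] at hpw
  exact hρK (mem_ball'.2 hpw) hw

end TendstoConstAwayFrom

structure UniformExpansion (G Z : Type*) [SMul G Z] [Dist Z] where
  c : ℝ
  δ : ℝ
  g : Z → G
  one_lt_c : 1 < c
  δ_pos : 0 < δ
  expand : ∀ w u, dist (g w • u) (g w • w) < δ → c * dist u w ≤ dist (g w • u) (g w • w)

namespace UniformExpansion

variable {G Z : Type*}

theorem nonempty_of_forall_expandingAt [Group G] [MetricSpace Z] [CompactSpace Z] [MulAction G Z]
    (hcont : ∀ g : G, Continuous fun z : Z => g • z) (hexp : ∀ z : Z, ExpandingAt G z) :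
    Nonempty (UniformExpansion G Z) := by
  choose γ U c hU hc hγ using hexp
  obtain ⟨t, -, ht⟩ := isCompact_univ.elim_nhds_subcover (fun w => interior (U w))
    fun w _ => interior_mem_nhds.2 (hU w)
  obtain ⟨ε, hε, hleb⟩ := lebesgue_number_lemma_of_metric isCompact_univ
    (c := fun j : t => interior (U j)) (fun _ => isOpen_interior) fun w _ => by
      obtain ⟨j, hj, hw⟩ := mem_iUnion₂.1 (ht (mem_univ w))
      exact mem_iUnion.2 ⟨⟨j, hj⟩, hw⟩
  choose i hi using fun w => hleb w (mem_univ w)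
  obtain ⟨c₀, hc₀, hc₀c⟩ : ∃ c₀, 1 < c₀ ∧ ∀ j : t, c₀ ≤ c j :=
    (show ∀ᶠ x in 𝓝[>] (1 : ℝ), 1 < x ∧ ∀ j : t, x ≤ c j from eventually_mem_nhdsWithin.and
      (eventually_all.2 fun j => nhdsWithin_le_nhds (eventually_le_nhds (hc j)))).exists
  obtain ⟨η, hη, hηε⟩ := Metric.uniformContinuous_iff.1
    (CompactSpace.uniformContinuous_of_continuous (continuous_pi fun j : t => hcont (γ j)⁻¹)) ε hε
  refine ⟨⟨c₀, η, fun w => γ (i w), hc₀, hη, fun w u hu => ?_⟩⟩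
  have huw : dist u w < ε := by
    simpa using (dist_le_pi_dist _ _ (i w)).trans_lt (hηε hu)
  have hu : u ∈ U (i w) := interior_subset (hi w huw)
  have hw : w ∈ U (i w) := interior_subset (hi w (mem_ball_self hε))
  calc c₀ * dist u w ≤ c (i w) * dist u w := by gcongr; exact hc₀c _
    _ ≤ _ := hγ _ u hu w hw

section Monoid

variable [Monoid G] [MetricSpace Z] [MulAction G Z] (E : UniformExpansion G Z)

/-- `E.iter z n = g xₙ₋₁ * ⋯ * g x₀` along the orbit `x₀ = z`, `xₖ₊₁ = g xₖ • xₖ`. -/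
def iter : Z → ℕ → G
  | _, 0 => 1
  | z, n + 1 => iter (E.g z • z) n * E.g z

theorem pow_mul_dist_le (z u : Z) (n : ℕ)
    (h : dist (E.iter z n • u) (E.iter z n • z) < E.δ) :
    E.c ^ n * dist u z ≤ dist (E.iter z n • u) (E.iter z n • z) := by
  induction n generalizing z u with
  | zero => simp [iter]
  | succ n ih =>
    simp only [iter, mul_smul] at h ⊢
    have hn := ih _ _ h
    have h₁ : dist (E.g z • u) (E.g z • z) < E.δ :=
      calc dist (E.g z • u) (E.g z • z) ≤ E.c ^ n * dist (E.g z • u) (E.g z • z) :=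
            le_mul_of_one_le_left dist_nonneg (one_le_pow₀ E.one_lt_c.le)
        _ < E.δ := hn.trans_lt h
    calc E.c ^ (n + 1) * dist u z = E.c ^ n * (E.c * dist u z) := by ring
      _ ≤ E.c ^ n * dist (E.g z • u) (E.g z • z) := by
          gcongr
          · exact pow_nonneg (zero_le_one.trans E.one_lt_c.le) n
          · exact E.expand z u h₁
      _ ≤ _ := hn

theorem tendsto_of_eventually_dist_lt {z : Z} {n : ℕ → ℕ} (hn : Tendsto n atTop atTop)
    {u : ℕ → Z} (h : ∀ᶠ i in atTop, dist (E.iter z (n i) • u i) (E.iter z (n i) • z) < E.δ) :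
    Tendsto u atTop (𝓝 z) := by
  have hc : ∀ k, 0 < E.c ^ k := fun k => pow_pos (zero_lt_one.trans E.one_lt_c) k
  have hlim : Tendsto (fun k => E.δ / E.c ^ k) atTop (𝓝 0) :=
    tendsto_const_nhds.div_atTop (tendsto_pow_atTop_atTop_of_one_lt E.one_lt_c)
  rw [tendsto_iff_dist_tendsto_zero]
  refine squeeze_zero' (Eventually.of_forall fun _ => dist_nonneg) ?_ (hlim.comp hn)
  filter_upwards [h] with i hi
  rw [Function.comp_apply, le_div_iff₀' (hc _)]
  exact (E.pow_mul_dist_le z _ _ hi).trans hi.le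

end Monoid

section Group

variable [Group G] [MetricSpace Z] [MulAction G Z] (E : UniformExpansion G Z)

theorem eventually_iter_ne (hperf : ∀ z : Z, ¬ IsOpen ({z} : Set Z)) (z : Z) (g : G) :
    ∀ᶠ n in atTop, E.iter z n ≠ g := by
  by_contra hfreq
  obtain ⟨φ, hφ, hφg⟩ := extraction_of_frequently_atTop
    ((not_eventually.1 hfreq).mono fun _ => not_not.1)
  have hball : ball (g • z) E.δ = {g • z} := by
    refine Subset.antisymm (fun y hy => ?_) (singleton_subset_iff.2 (mem_ball_self E.δ_pos))
    have hy' : Tendsto (fun _ : ℕ => g⁻¹ • y) atTop (𝓝 z) :=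
      E.tendsto_of_eventually_dist_lt hφ.tendsto_atTop
        (Eventually.of_forall fun i => by rwa [hφg i, smul_inv_smul])
    exact inv_smul_eq_iff.1 (tendsto_const_nhds_iff.1 hy')
  exact hperf (g • z) (hball ▸ isOpen_ball)

theorem divergesToInfinity_inv_iter (hperf : ∀ z : Z, ¬ IsOpen ({z} : Set Z)) (z : Z)
    {n : ℕ → ℕ} (hn : Tendsto n atTop atTop) :
    DivergesToInfinity fun i => (E.iter z (n i))⁻¹ :=
  divergesToInfinity_of_eventually_ne fun g =>
    hn.eventually (p := fun k => (E.iter z k)⁻¹ ≠ g) <|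
      (E.eventually_iter_ne hperf z g⁻¹).mono fun _ h hg => h (inv_eq_iff_eq_inv.1 hg)

variable {z : Z} {n : ℕ → ℕ} {a : Z}

/-- The `δ`-balls around `E.iter z (n i) • z`, which eventually contain a fixed point `s ≠ m`,
are shrunk onto `z`. -/
theorem eq_of_tendstoConstAwayFrom_inv (hperf : ∀ z : Z, ¬ IsOpen ({z} : Set Z))
    (hn : Tendsto n atTop atTop) (ha : Tendsto (fun i => E.iter z (n i) • z) atTop (𝓝 a))
    {m p : Z} (h : TendstoConstAwayFrom (fun i => (E.iter z (n i))⁻¹) m p) : p = z := by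
  have hδ := half_pos E.δ_pos
  obtain ⟨s, hsm, hsa⟩ := (dense_compl_singleton_iff_not_open.2 (hperf m)).exists_mem_open
    isOpen_ball ⟨a, mem_ball_self hδ⟩
  refine tendsto_nhds_unique (h.tendsto hsm) (E.tendsto_of_eventually_dist_lt hn ?_)
  filter_upwards [ha.eventually (ball_mem_nhds a hδ)] with i hi
  rw [smul_inv_smul]
  exact ball_subset_ball' (by linarith [mem_ball'.1 hi]) hsa

theorem ne_of_tendstoConstAwayFrom (hperf : ∀ z : Z, ¬ IsOpen ({z} : Set Z))
    (hn : Tendsto n atTop atTop) (ha : Tendsto (fun i => E.iter z (n i) • z) atTop (𝓝 a))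
    {b : Z} (h : TendstoConstAwayFrom (fun i => E.iter z (n i)) z b) : b ≠ a := by
  rintro rfl
  obtain ⟨w, hwz, -⟩ := (dense_compl_singleton_iff_not_open.2 (hperf z)).exists_mem_open
    isOpen_univ ⟨z, mem_univ z⟩
  have hdist := (h.tendsto hwz).dist ha
  rw [dist_self] at hdist
  have hw : Tendsto (fun _ : ℕ => w) atTop (𝓝 z) :=
    E.tendsto_of_eventually_dist_lt hn (hdist.eventually (gt_mem_nhds E.δ_pos))
  exact hwz (tendsto_const_nhds_iff.1 hw)

end Group

end UniformExpansion

/-- If a convergence action of `Γ` on a perfect compact metric space `Z` is expanding at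
every point of `Z`, then every point of `Z` is intrinsically conical. -/
theorem expanding_convergence_action_all_points_intrinsically_conical
    {G Z : Type*} [Group G] [MetricSpace Z] [CompactSpace Z] [MulAction G Z]
    (hcont : ∀ γ : G, Continuous fun z : Z => γ • z)
    (hperf : ∀ z : Z, ¬ IsOpen ({z} : Set Z))
    (hconv : ConvergenceAction G Z)
    (hexp : ∀ z : Z, ExpandingAt G z) :
    ∀ z : Z, IntrinsicallyConical G z := by
  intro z
  obtain ⟨E⟩ := UniformExpansion.nonempty_of_forall_expandingAt hcont hexp
  obtain ⟨p, b, k, hk, hkp⟩ := hconv _ (E.divergesToInfinity_inv_iter hperf z tendsto_id)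
  obtain ⟨a, -, φ, hφ, ha⟩ :=
    isCompact_univ.tendsto_subseq fun i => mem_univ (E.iter z (k i) • z)
  have hn : Tendsto (fun i => k (φ i)) atTop atTop := (hk.comp hφ).tendsto_atTop
  have hp : TendstoConstAwayFrom (fun i => (E.iter z (k (φ i)))⁻¹) b p :=
    TendstoConstAwayFrom.comp_tendsto hkp hφ.tendsto_atTop
  rw [E.eq_of_tendstoConstAwayFrom_inv hperf hn ha hp] at hp
  have hswap : TendstoConstAwayFrom (fun i => E.iter z (k (φ i))) z b := by
    simpa only [inv_inv] using hp.inv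
  refine ⟨fun i => (E.iter z (k (φ i)))⁻¹, a, b, E.divergesToInfinity_inv_iter hperf z hn,
    by simp only [inv_inv]; exact ha, by simp only [inv_inv]; exact hswap,
    E.ne_of_tendstoConstAwayFrom hperf hn ha hswap⟩
end

section
/- Let Z be a metric space, γ : Z → Z a homeomorphism, z ∈ Z, and suppose there are constants c > 1 and r₀ > 0 such that d(γ z₁, γ z₂) ≥ c · d(z₁, z₂) for all z₁, z₂ in the open ball B(z, r₀). Then there exists r with 0 < r ≤ r₀ such that for every r' with 0 < r' ≤ r the open ball B(γ z, c·r') is contained in the image γ(B(z, r')). -/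
open Metric

/-- If a homeomorphism `γ` of a metric space is a `c`-expansion (with `c > 1`) on the ball
`B(z, r₀)`, then there is a radius `0 < r ≤ r₀` such that for every `0 < r' ≤ r` the ball
`B(γ z, c·r')` is contained in the image `γ(B(z, r'))`. -/
theorem expansion_maps_balls_onto_larger_balls
    {Z : Type*} [MetricSpace Z] (γ : Z ≃ₜ Z) (z : Z) (c r₀ : ℝ)
    (hc : 1 < c) (hr₀ : 0 < r₀)
    (hexp : ∀ z₁ ∈ ball z r₀, ∀ z₂ ∈ ball z r₀, c * dist z₁ z₂ ≤ dist (γ z₁) (γ z₂)) :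
    ∃ r, 0 < r ∧ r ≤ r₀ ∧
      ∀ r', 0 < r' → r' ≤ r → ball (γ z) (c * r') ⊆ ⇑γ '' ball z r' := by
  have hc0 : (0:ℝ) < c := lt_trans one_pos hc
  -- continuity of γ⁻¹ at γ z
  have hcont : ContinuousAt γ.symm (γ z) := γ.symm.continuous.continuousAt
  rw [Metric.continuousAt_iff] at hcont
  obtain ⟨δ, hδ, hδball⟩ := hcont r₀ hr₀
  refine ⟨min r₀ (δ / c), lt_min hr₀ (div_pos hδ hc0), min_le_left _ _, ?_⟩
  intro r' hr' hr'le y hy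
  have hyz : dist y (γ z) < c * r' := mem_ball.mp hy
  have hcr : c * r' ≤ δ := by
    have h1 : r' ≤ δ / c := le_trans hr'le (min_le_right _ _)
    calc c * r' ≤ c * (δ / c) := by nlinarith
    _ = δ := by field_simp
  -- pull y back
  have hx₀ : dist (γ.symm y) (γ.symm (γ z)) < r₀ := hδball (lt_of_lt_of_le hyz hcr)
  rw [γ.symm_apply_apply] at hx₀
  have hxball : γ.symm y ∈ ball z r₀ := mem_ball.mpr hx₀
  have hzball : z ∈ ball z r₀ := mem_ball_self hr₀
  have hkey := hexp (γ.symm y) hxball z hzball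
  rw [γ.apply_symm_apply] at hkey
  have : dist (γ.symm y) z < r' := by
    have := lt_of_le_of_lt hkey hyz
    nlinarith
  exact ⟨γ.symm y, mem_ball.mpr this, γ.apply_symm_apply y⟩
end

section
/- Let Γ be a group acting by homeomorphisms on a compact metric space Z, and suppose the action is expanding at every point of Z. Then there exist uniform constants r > 0 and c > 1 such that for every z ∈ Z there is an element γ ∈ Γ with: d(γ z₁, γ z₂) ≥ c · d(z₁, z₂) for all z₁, z₂ ∈ B(z, r), and B(γ z, c·r') ⊆ γ(B(z, r')) for every r' with 0 < r' ≤ r. -/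
open Filter Metric Set Topology

/-- If a group acts by homeomorphisms on a compact metric space, expanding at every point,
then there are uniform constants `r > 0` and `c > 1` such that every point `z` admits a group
element `γ` which is a `c`-expansion on `B(z, r)` and satisfies
`B(γ z, c·r') ⊆ γ(B(z, r'))` for every `0 < r' ≤ r`. -/
theorem uniform_expansion_constants
    {G Z : Type*} [Group G] [MetricSpace Z] [CompactSpace Z] [MulAction G Z]
    (hcont : ∀ γ : G, Continuous fun z : Z => γ • z)
    (hexp : ∀ z : Z, ExpandingAt G z) :
    ∃ r c : ℝ, 0 < r ∧ 1 < c ∧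
      ∀ z : Z, ∃ γ : G,
        (∀ z₁ ∈ ball z r, ∀ z₂ ∈ ball z r, c * dist z₁ z₂ ≤ dist (γ • z₁) (γ • z₂)) ∧
        ∀ r', 0 < r' → r' ≤ r →
          ball (γ • z) (c * r') ⊆ (fun w : Z => γ • w) '' ball z r' := by
  rcases isEmpty_or_nonempty Z with hZ | hZ
  · exact ⟨1, 2, one_pos, one_lt_two, fun z => (IsEmpty.false z).elim⟩
  choose γ U c hU hc hexp' using hexp
  have hball : ∀ p : Z, ∃ ε > (0 : ℝ), ball p (2 * ε) ⊆ U p := by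
    intro p
    rcases Metric.mem_nhds_iff.mp (hU p) with ⟨ε, hε, hsub⟩
    refine ⟨ε / 2, by linarith, ?_⟩
    have : 2 * (ε / 2) = ε := by ring
    rw [this]; exact hsub
  choose ε hε hεU using hball
  -- finite subcover
  obtain ⟨F, hF⟩ := IsCompact.elim_finite_subcover isCompact_univ
    (fun p : Z => ball p (ε p)) (fun p => isOpen_ball)
    (fun z _ => mem_iUnion.2 ⟨z, mem_ball_self (hε z)⟩)
  have hFne : F.Nonempty := by
    rcases hZ with ⟨z⟩
    rcases mem_iUnion₂.mp (hF (mem_univ z)) with ⟨p, hp, _⟩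
    exact ⟨p, hp⟩
  set c₀ : ℝ := F.inf' hFne c with hc₀def
  set ε₀ : ℝ := F.inf' hFne ε with hε₀def
  have hc₀ : 1 < c₀ := by
    rw [hc₀def, Finset.lt_inf'_iff]
    exact fun p _ => hc p
  have hε₀ : 0 < ε₀ := by
    rw [hε₀def, Finset.lt_inf'_iff]
    exact fun p _ => hε p
  -- uniform continuity of inverses
  have hUC : ∀ p : Z, ∃ δ > (0 : ℝ), ∀ a b : Z,
      dist a b < δ → dist ((γ p)⁻¹ • a) ((γ p)⁻¹ • b) < ε₀ := by
    intro p
    have huc := CompactSpace.uniformContinuous_of_continuous (hcont (γ p)⁻¹)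
    rcases Metric.uniformContinuous_iff.mp huc ε₀ hε₀ with ⟨δ, hδ, h⟩
    exact ⟨δ, hδ, fun a b hab => h hab⟩
  choose δ hδ hδε using hUC
  set δ₀ : ℝ := F.inf' hFne δ with hδ₀def
  have hδ₀ : 0 < δ₀ := by
    rw [hδ₀def, Finset.lt_inf'_iff]
    exact fun p _ => hδ p
  set r : ℝ := min ε₀ (δ₀ / c₀) with hrdef
  have hc₀pos : (0 : ℝ) < c₀ := lt_trans one_pos hc₀
  have hr : 0 < r := lt_min hε₀ (div_pos hδ₀ hc₀pos)
  refine ⟨r, c₀, hr, hc₀, fun z => ?_⟩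
  rcases mem_iUnion₂.mp (hF (mem_univ z)) with ⟨p, hpF, hzp⟩
  have hεp : ε₀ ≤ ε p := Finset.inf'_le _ hpF
  have hcp : c₀ ≤ c p := Finset.inf'_le _ hpF
  have hδp : δ₀ ≤ δ p := Finset.inf'_le _ hpF
  have hrε : r ≤ ε p := le_trans (min_le_left _ _) hεp
  have hzU : ∀ w : Z, dist w z < ε₀ → w ∈ U p := by
    intro w hw
    apply hεU p
    have : dist w p ≤ dist w z + dist z p := dist_triangle _ _ _
    have : dist w p < ε₀ + ε p := lt_of_le_of_lt this (by
      have := mem_ball.mp hzp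
      linarith)
    exact mem_ball.mpr (by nlinarith)
  have hzUp : z ∈ U p := hzU z (by simpa using hε₀)
  refine ⟨γ p, ?_, ?_⟩
  · intro z₁ hz₁ z₂ hz₂
    have h₁ : z₁ ∈ U p := hzU z₁ (lt_of_lt_of_le (mem_ball.mp hz₁) (min_le_left _ _))
    have h₂ : z₂ ∈ U p := hzU z₂ (lt_of_lt_of_le (mem_ball.mp hz₂) (min_le_left _ _))
    have := hexp' p z₁ h₁ z₂ h₂
    nlinarith [dist_nonneg (x := z₁) (y := z₂)]
  · intro r' hr' hr'r w hw
    set u : Z := (γ p)⁻¹ • w with hu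
    have hwγu : γ p • u = w := by rw [hu, smul_inv_smul]
    have hdw : dist w (γ p • z) < c₀ * r' := mem_ball.mp hw
    have hrδ : c₀ * r ≤ δ₀ := by
      have : r ≤ δ₀ / c₀ := min_le_right _ _
      calc c₀ * r ≤ c₀ * (δ₀ / c₀) := by nlinarith
        _ = δ₀ := by field_simp
    have hdwδ : dist w (γ p • z) < δ p := by
      have : c₀ * r' ≤ c₀ * r := by nlinarith
      linarith
    have huz : dist u z < ε₀ := by
      have := hδε p w (γ p • z) hdwδ
      rwa [inv_smul_smul] at this
    have huU : u ∈ U p := hzU u huz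
    have hexpand := hexp' p u huU z hzUp
    have hdist : dist (γ p • u) (γ p • z) = dist w (γ p • z) := by rw [hwγu]
    have : c p * dist u z < c₀ * r' := by rw [← hdist] at hdw; linarith
    have hur' : dist u z < r' := by nlinarith [dist_nonneg (x := u) (y := z)]
    exact ⟨u, mem_ball.mpr hur', hwγu⟩
end

section
/- Let Γ be a group acting by homeomorphisms on a compact metric space Z, and suppose the action is expanding at every point of Z. Then there exists r > 0 such that for every point z ∈ Z and every neighbourhood V of z there is an element γ ∈ Γ with B(γ z, r) ⊆ γ(V), equivalently γ(Z ∖ V) ⊆ Z ∖ B(γ z, r). -/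
open Filter Metric Set Topology

/-- Disjoint compact and closed sets are at positive distance. -/
lemma exists_pos_forall_le_dist' {Z : Type*} [MetricSpace Z] {s t : Set Z}
    (hs : IsCompact s) (ht : IsClosed t) (hst : Disjoint s t) :
    ∃ δ : ℝ, 0 < δ ∧ ∀ x ∈ s, ∀ y ∈ t, δ ≤ dist x y := by
  obtain ⟨r, hr, h⟩ := EMetric.exists_pos_forall_lt_edist hs ht hst
  refine ⟨r, hr, fun x hx y hy => ?_⟩
  have h2 := h x hx y hy
  rw [edist_dist, ← ENNReal.ofReal_coe_nnreal,
    ENNReal.ofReal_lt_ofReal_iff_of_nonneg r.coe_nonneg] at h2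
  exact h2.le

/-- If a group acts by homeomorphisms on a compact metric space, expanding at every point,
then there is `r > 0` such that for every point `z` and every neighborhood `V` of `z` there
is `γ` with `B(γ z, r) ⊆ γ(V)`, equivalently `γ(Z ∖ V) ⊆ Z ∖ B(γ z, r)`. -/
theorem expansion_blows_up_neighborhoods
    {G Z : Type*} [Group G] [MetricSpace Z] [CompactSpace Z] [MulAction G Z]
    (hcont : ∀ γ : G, Continuous fun z : Z => γ • z)
    (hexp : ∀ z : Z, ExpandingAt G z) :
    ∃ r : ℝ, 0 < r ∧ ∀ z : Z, ∀ V ∈ 𝓝 z, ∃ γ : G,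
      ball (γ • z) r ⊆ (fun w : Z => γ • w) '' V ∧
      (fun w : Z => γ • w) '' Vᶜ ⊆ (ball (γ • z) r)ᶜ := by
  classical
  rcases isEmpty_or_nonempty Z with hZ | hZ
  · exact ⟨1, one_pos, fun z => (IsEmpty.false z).elim⟩
  choose γf Uf cf hU hc hexp' using hexp
  -- choose radii ε such that ball z (2 ε z) ⊆ U z
  have hε : ∀ z : Z, ∃ ε : ℝ, 0 < ε ∧ ball z (2 * ε) ⊆ Uf z := by
    intro z
    rcases Metric.mem_nhds_iff.1 (hU z) with ⟨ε, hε0, hb⟩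
    exact ⟨ε / 2, by linarith, by rw [show 2 * (ε / 2) = ε by ring]; exact hb⟩
  choose εf hεpos hεsub using hε
  -- finite subcover
  obtain ⟨T, -, hT⟩ := isCompact_univ.elim_nhds_subcover (fun z => ball z (εf z))
    (fun z _ => ball_mem_nhds z (hεpos z))
  have hTne : T.Nonempty := by
    obtain ⟨z⟩ := hZ
    have hz := hT (mem_univ z)
    simp only [Set.mem_iUnion] at hz
    obtain ⟨t, ht, -⟩ := hz
    exact ⟨t, ht⟩
  -- separation constants δ
  have hδ : ∀ t : Z, ∃ δ : ℝ, 0 < δ ∧ ∀ x, dist x t ≤ εf t → ∀ u, 2 * εf t ≤ dist u t →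
      δ ≤ dist (γf t • x) (γf t • u) := by
    intro t
    set g := γf t with hg
    have hK : IsCompact ((fun w : Z => g • w) '' closedBall t (εf t)) :=
      (isCompact_closedBall t _).image (hcont g)
    have hAcl : IsClosed {u : Z | 2 * εf t ≤ dist u t} := by
      have : {u : Z | 2 * εf t ≤ dist u t} = (ball t (2 * εf t))ᶜ := by
        ext u; simp [mem_ball, not_lt]
      rw [this]; exact isOpen_ball.isClosed_compl
    have hL : IsClosed ((fun w : Z => g • w) '' {u : Z | 2 * εf t ≤ dist u t}) :=
      ((hAcl.isCompact).image (hcont g)).isClosed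
    have hdisj : Disjoint ((fun w : Z => g • w) '' closedBall t (εf t))
        ((fun w : Z => g • w) '' {u : Z | 2 * εf t ≤ dist u t}) := by
      rw [Set.disjoint_left]
      rintro _ ⟨x, hx, rfl⟩ ⟨u, hu, hequ⟩
      have : x = u := smul_left_cancel g hequ.symm
      subst this
      have h1 : dist x t ≤ εf t := mem_closedBall.1 hx
      have h2 : 2 * εf t ≤ dist x t := hu
      have := hεpos t
      linarith
    obtain ⟨δ, hδ0, h⟩ := exists_pos_forall_le_dist' hK hL hdisj
    exact ⟨δ, hδ0, fun x hx u hu =>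
      h _ ⟨x, mem_closedBall.2 hx, rfl⟩ _ ⟨u, hu, rfl⟩⟩
  choose δf hδpos hδf using hδ
  set r : ℝ := T.inf' hTne (fun t => min (εf t) (δf t)) with hrdef
  set c : ℝ := T.inf' hTne cf with hcdef
  have hr0 : 0 < r := by
    rw [hrdef, Finset.lt_inf'_iff]
    exact fun t _ => lt_min (hεpos t) (hδpos t)
  have hc1 : 1 < c := by
    rw [hcdef, Finset.lt_inf'_iff]
    exact fun t _ => hc t
  have hc0 : 0 < c := lt_trans one_pos hc1
  have hrε : ∀ t ∈ T, r ≤ εf t := fun t ht =>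
    le_trans (Finset.inf'_le _ ht) (min_le_left _ _)
  have hrδ : ∀ t ∈ T, r ≤ δf t := fun t ht =>
    le_trans (Finset.inf'_le _ ht) (min_le_right _ _)
  have hcle : ∀ t ∈ T, c ≤ cf t := fun t ht => Finset.inf'_le _ ht
  -- one-step expansion
  have step : ∀ (x : Z) (ρ : ℝ), 0 < ρ → ρ ≤ r →
      ∃ g : G, ∀ u, ρ ≤ dist x u → min (c * ρ) r ≤ dist (g • x) (g • u) := by
    intro x ρ hρ0 hρr
    have hx := hT (mem_univ x)
    simp only [Set.mem_iUnion] at hx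
    obtain ⟨t, htT, hxt⟩ := hx
    have hxt' : dist x t < εf t := mem_ball.1 hxt
    refine ⟨γf t, fun u hu => ?_⟩
    by_cases hU' : u ∈ Uf t
    · have hxU : x ∈ Uf t := hεsub t (mem_ball.2 (by nlinarith [hεpos t]))
      have hkey := hexp' t x hxU u hU'
      have h1 : c * ρ ≤ cf t * dist x u :=
        mul_le_mul (hcle t htT) hu hρ0.le (le_trans hc0.le (hcle t htT))
      exact le_trans (min_le_left _ _) (le_trans h1 hkey)
    · have h2 : 2 * εf t ≤ dist u t := by
        by_contra h
        push_neg at h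
        exact hU' (hεsub t (mem_ball.2 h))
      have := hδf t x hxt'.le u h2
      exact le_trans (min_le_right _ _) (le_trans (hrδ t htT) this)
  -- iterated expansion
  have iter : ∀ (n : ℕ) (z : Z) (ρ : ℝ), 0 < ρ → ρ ≤ r →
      ∃ g : G, ∀ u, ρ ≤ dist z u → min (c ^ n * ρ) r ≤ dist (g • z) (g • u) := by
    intro n
    induction n with
    | zero =>
      intro z ρ hρ0 hρr
      refine ⟨1, fun u hu => ?_⟩
      simp only [one_smul, pow_zero, one_mul]
      exact le_trans (min_le_left _ _) hu
    | succ n ih =>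
      intro z ρ hρ0 hρr
      obtain ⟨g, hg⟩ := ih z ρ hρ0 hρr
      set ρ' : ℝ := min (c ^ n * ρ) r with hρ'def
      have hρ'0 : 0 < ρ' := lt_min (by positivity) hr0
      have hρ'r : ρ' ≤ r := min_le_right _ _
      obtain ⟨g', hg'⟩ := step (g • z) ρ' hρ'0 hρ'r
      refine ⟨g' * g, fun u hu => ?_⟩
      have h2 := hg' (g • u) (hg u hu)
      rw [mul_smul, mul_smul]
      refine le_trans ?_ h2
      refine le_min ?_ (min_le_right _ _)
      have : c * ρ' = min (c ^ (n + 1) * ρ) (c * r) := by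
        rw [hρ'def, mul_min_of_nonneg _ _ hc0.le, pow_succ]; ring_nf
      rw [this]
      exact min_le_min le_rfl (le_mul_of_one_le_left hr0.le hc1.le)
  -- conclusion
  refine ⟨r, hr0, fun z V hV => ?_⟩
  obtain ⟨ρ, hρ0, hρV⟩ := Metric.mem_nhds_iff.1 hV
  set ρ₀ : ℝ := min ρ r with hρ₀def
  have hρ₀0 : 0 < ρ₀ := lt_min hρ0 hr0
  have hρ₀r : ρ₀ ≤ r := min_le_right _ _
  obtain ⟨n, hn⟩ := pow_unbounded_of_one_lt (r / ρ₀) hc1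
  have hrn : r ≤ c ^ n * ρ₀ := by
    rw [div_lt_iff₀ hρ₀0] at hn
    exact hn.le
  obtain ⟨g, hg⟩ := iter n z ρ₀ hρ₀0 hρ₀r
  have hg' : ∀ u, ρ₀ ≤ dist z u → r ≤ dist (g • z) (g • u) := by
    intro u hu
    have h := hg u hu
    rwa [min_eq_right hrn] at h
  refine ⟨g, ?_, ?_⟩
  · intro w hw
    refine ⟨g⁻¹ • w, ?_, by simp [smul_inv_smul]⟩
    by_contra hcon
    have h1 : ρ₀ ≤ dist z (g⁻¹ • w) := by
      by_contra h
      push_neg at h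
      exact hcon (hρV (mem_ball.2 (by rw [dist_comm]; exact lt_of_lt_of_le h (min_le_left _ _))))
    have h2 := hg' _ h1
    rw [smul_inv_smul] at h2
    rw [mem_ball, dist_comm] at hw
    linarith
  · rintro _ ⟨u, hu, rfl⟩
    simp only [Set.mem_compl_iff, mem_ball, not_lt]
    have h1 : ρ₀ ≤ dist z u := by
      by_contra h
      push_neg at h
      exact hu (hρV (mem_ball.2 (by rw [dist_comm]; exact lt_of_lt_of_le h (min_le_left _ _))))
    rw [dist_comm]
    exact hg' u h1
end

section
/- Let Γ be a group with a convergence action on a perfect compact metric space Z, and suppose the action is uniform. Then every point of Z is intrinsically conical. -/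
/-!
Pick `y ≠ z` and points `x n → z` avoiding `z` and `y`, and move each triple `(z, x n, y)` into
the compact set `K ⊆ Trip(Z)` by some `γ n`. No group element repeats infinitely often, since
the triples degenerate, so `γ n → ∞`; along a subsequence `γ n` converges to a constant `zp` off
a point `zm`, and the moved triples converge to some `(p, q, r) ∈ K`. If `zm ≠ z`, both `γ n • z`
and `γ n • x n` would tend to `zp`, forcing `p = q`; hence `zm = z`, so `γ n • y → zp` gives
`r = zp ≠ p`, and `z` is conical with `a = p`, `b = zp`.
-/

open Filter Metric Set Topology

/-- The space of triples of pairwise distinct points. -/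
def tripSet (Z : Type*) : Set (Z × Z × Z) :=
  {p | p.1 ≠ p.2.1 ∧ p.1 ≠ p.2.2 ∧ p.2.1 ≠ p.2.2}

/-- An action is uniform if the diagonal action on the space of triples of pairwise distinct
points is cocompact. -/
def UniformAction (G Z : Type*) [Group G] [MetricSpace Z] [MulAction G Z] : Prop :=
  ∃ K : Set (Z × Z × Z), K ⊆ tripSet Z ∧ IsCompact K ∧
    ∀ p ∈ tripSet Z, ∃ γ : G, (γ • p.1, γ • p.2.1, γ • p.2.2) ∈ K

namespace DivergesToInfinity

variable {G : Type*} {γ : ℕ → G}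

theorem comp_strictMono (h : DivergesToInfinity γ) {φ : ℕ → ℕ} (hφ : StrictMono φ) :
    DivergesToInfinity (γ ∘ φ) :=
  fun F => show (φ ⁻¹' {m | γ m ∈ F}).Finite from (h F).preimage hφ.injective.injOn

theorem inv [Group G] (h : DivergesToInfinity γ) : DivergesToInfinity fun n => (γ n)⁻¹ :=
  fun F => (h (F.map (Equiv.inv G).toEmbedding)).subset fun n hn => by
    simpa [Finset.mem_map_equiv] using hn

end DivergesToInfinity

theorem exists_strictMono_const_of_not_divergesToInfinity {G : Type*} {γ : ℕ → G}
    (h : ¬DivergesToInfinity γ) : ∃ (g : G) (φ : ℕ → ℕ), StrictMono φ ∧ ∀ n, γ (φ n) = g := by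
  obtain ⟨F, hF⟩ : ∃ F : Finset G, {n | γ n ∈ F}.Infinite := by
    simpa [DivergesToInfinity] using h
  obtain ⟨g, -, hg⟩ : ∃ g ∈ F, {n | γ n = g}.Infinite := by
    by_contra! hfin
    exact hF ((F.finite_toSet.biUnion hfin).subset fun n hn => mem_biUnion hn rfl)
  exact ⟨g, Filter.extraction_of_frequently_atTop (Nat.frequently_atTop_iff_infinite.2 hg)⟩

theorem exists_seq_tendsto_of_not_isOpen_singleton {X : Type*} [TopologicalSpace X]
    [FrechetUrysohnSpace X] [T1Space X] {z y : X} (hz : ¬IsOpen ({z} : Set X)) (hyz : y ≠ z) :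
    ∃ x : ℕ → X, (∀ n, x n ≠ z ∧ x n ≠ y) ∧ Tendsto x atTop (𝓝 z) := by
  have hdense : Dense ({z}ᶜ : Set X) := dense_compl_singleton_iff_not_open.2 hz
  have hmem : z ∈ closure ({z}ᶜ ∩ {y}ᶜ) := by
    rw [inter_comm]
    exact isOpen_compl_singleton.inter_closure ⟨hyz.symm, hdense.closure_eq ▸ mem_univ z⟩
  exact mem_closure_iff_seq_limit.1 hmem

theorem TendstoLocallyUniformlyOn.comp_tendsto {ι ι' X Y : Type*} [TopologicalSpace X]
    [UniformSpace Y] {F : ι → X → Y} {f : X → Y} {p : Filter ι} {s : Set X}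
    (h : TendstoLocallyUniformlyOn F f p s) {q : Filter ι'} {φ : ι' → ι} (hφ : Tendsto φ q p) :
    TendstoLocallyUniformlyOn (fun n => F (φ n)) f q s :=
  fun u hu x hx => (h u hu x hx).imp fun _ ⟨ht, hev⟩ => ⟨ht, hφ.eventually hev⟩

section Action

variable {G Z : Type*} [Group G] [MetricSpace Z] [MulAction G Z]

theorem divergesToInfinity_of_smul_triple_mem (hcont : ∀ g : G, Continuous fun z : Z => g • z)
    {K : Set (Z × Z × Z)} (hK : IsClosed K) (hKt : K ⊆ tripSet Z) {γ : ℕ → G} {x : ℕ → Z}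
    {z y : Z} (hx : Tendsto x atTop (𝓝 z)) (hγ : ∀ n, (γ n • z, γ n • x n, γ n • y) ∈ K) :
    DivergesToInfinity γ := by
  by_contra hdiv
  obtain ⟨g, φ, hφ, hγφ⟩ := exists_strictMono_const_of_not_divergesToInfinity hdiv
  have hlim : Tendsto (fun n => (g • z, g • x (φ n), g • y)) atTop (𝓝 (g • z, g • z, g • y)) :=
    tendsto_const_nhds.prodMk_nhds
      ((((hcont g).tendsto z).comp (hx.comp hφ.tendsto_atTop)).prodMk_nhds tendsto_const_nhds)
  have hmem : (g • z, g • z, g • y) ∈ K :=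
    hK.mem_of_tendsto hlim (Eventually.of_forall fun n => hγφ n ▸ hγ (φ n))
  exact (hKt hmem).1 rfl

theorem ConvergenceAction.exists_tendstoLocallyUniformlyOn [LocallyCompactSpace Z]
    (hconv : ConvergenceAction G Z) {γ : ℕ → G} (hγ : DivergesToInfinity γ) :
    ∃ (zp zm : Z) (k : ℕ → ℕ), StrictMono k ∧
      TendstoLocallyUniformlyOn (fun n w => γ (k n) • w) (fun _ => zp) atTop {zm}ᶜ := by
  obtain ⟨zp, zm, k, hk, hunif⟩ := hconv γ hγ
  exact ⟨zp, zm, k, hk,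
    (tendstoLocallyUniformlyOn_iff_forall_isCompact isOpen_compl_singleton).2 fun C hC hCc =>
      hunif C hCc hC⟩

theorem intrinsicallyConical_of_tendstoLocallyUniformlyOn [LocallyCompactSpace Z] {γ : ℕ → G}
    (hγ : DivergesToInfinity γ) {z a b : Z} (ha : Tendsto (fun n => γ n • z) atTop (𝓝 a))
    (hb : TendstoLocallyUniformlyOn (fun n w => γ n • w) (fun _ => b) atTop {z}ᶜ) (hab : b ≠ a) :
    IntrinsicallyConical G z := by
  refine ⟨fun n => (γ n)⁻¹, a, b, hγ.inv, by simpa using ha, fun K hK hKz => ?_, hab⟩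
  simpa using (tendstoLocallyUniformlyOn_iff_forall_isCompact isOpen_compl_singleton).1 hb K hKz hK

theorem eq_of_tendstoLocallyUniformlyOn_compl_singleton {γ : ℕ → G} {zp zm z p q : Z}
    {x : ℕ → Z} (hloc : TendstoLocallyUniformlyOn (fun n w => γ n • w) (fun _ => zp) atTop {zm}ᶜ)
    (hx : Tendsto x atTop (𝓝 z)) (hp : Tendsto (fun n => γ n • z) atTop (𝓝 p))
    (hq : Tendsto (fun n => γ n • x n) atTop (𝓝 q)) (hpq : p ≠ q) : zm = z := by
  by_contra hne
  have hz : z ∈ ({zm}ᶜ : Set Z) := Ne.symm hne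
  have hattract :
      ∀ w : ℕ → Z, Tendsto w atTop (𝓝 z) → Tendsto (fun n => γ n • w n) atTop (𝓝 zp) :=
    fun w hw => hloc.tendsto_comp continuousWithinAt_const hz
      (by rwa [isOpen_compl_singleton.nhdsWithin_eq hz])
  exact hpq ((tendsto_nhds_unique hp (hattract _ tendsto_const_nhds)).trans
    (tendsto_nhds_unique (hattract x hx) hq))

end Action

/-- For a uniform convergence action on a perfect compact metric space, every point is
intrinsically conical. -/
theorem uniform_convergence_action_all_points_intrinsically_conical
    {G Z : Type*} [Group G] [MetricSpace Z] [CompactSpace Z] [MulAction G Z]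
    (hcont : ∀ γ : G, Continuous fun z : Z => γ • z)
    (hperf : ∀ z : Z, ¬ IsOpen ({z} : Set Z))
    (hconv : ConvergenceAction G Z)
    (huni : UniformAction G Z) :
    ∀ z : Z, IntrinsicallyConical G z := by
  intro z
  obtain ⟨K, hKt, hK, hGK⟩ := huni
  obtain ⟨y, hyz⟩ : ∃ y, y ≠ z := by
    by_contra! h
    exact hperf z (by convert isOpen_univ; ext w; simp [h w])
  obtain ⟨x, hx, hxz⟩ := exists_seq_tendsto_of_not_isOpen_singleton (hperf z) hyz
  choose γ hγ using fun n => hGK (z, x n, y) ⟨(hx n).1.symm, hyz.symm, (hx n).2⟩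
  have hdiv := divergesToInfinity_of_smul_triple_mem hcont hK.isClosed hKt hxz hγ
  obtain ⟨zp, zm, k, hk, hloc⟩ := hconv.exists_tendstoLocallyUniformlyOn hdiv
  obtain ⟨⟨p, q, r⟩, hpqr, φ, hφ, hlim⟩ := hK.tendsto_subseq fun n => hγ (k n)
  replace hloc := hloc.comp_tendsto hφ.tendsto_atTop
  obtain ⟨hpq, hpr, -⟩ := hKt hpqr
  have hp := hlim.fst_nhds
  obtain rfl : zm = z := eq_of_tendstoLocallyUniformlyOn_compl_singleton hloc
    (hxz.comp (hk.comp hφ).tendsto_atTop) hp hlim.snd_nhds.fst_nhds hpq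
  have hr : r = zp := tendsto_nhds_unique hlim.snd_nhds.snd_nhds (hloc.tendsto_at hyz)
  exact intrinsicallyConical_of_tendstoLocallyUniformlyOn (hdiv.comp_strictMono (hk.comp hφ)) hp
    hloc (hr ▸ hpr.symm)
end

section
/- Let F₂ be the free group on two generators x, y, let φ : F₂ → ℤ be the homomorphism with φ(x) = φ(y) = 1, and let Γ = {(h₁, h₂) ∈ F₂ × F₂ : φ(h₁) = φ(h₂)}. Let S = {(x,1), (y,1), (1,x), (1,y)} (a generating set of F₂ × F₂) and T = {(x,x), (y,x), (x,y)}. Then T generates Γ, and Γ is undistorted in F₂ × F₂: there is a constant C > 0 such that ℓ_T(γ) ≤ C · ℓ_S(γ) for every γ ∈ Γ. -/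
/-!
Each of the homomorphisms `γ ↦ (γ₁, x ^ φ γ₁)`, `γ ↦ (x, x) ^ (-φ γ₁)` and `γ ↦ (x ^ φ γ₂, γ₂)`
of `F₂ × F₂` sends every element of `S` to `1` or to an element of `T ∪ T⁻¹`, so it maps `F₂ × F₂`
into `⟨T⟩` and is `1`-Lipschitz from the `S`-word length to the `T`-word length. For `γ ∈ Γ`
the three images multiply to `γ`, hence `γ ∈ ⟨T⟩` and `ℓ_T(γ) ≤ 3 ℓ_S(γ)`.
-/

noncomputable section

/-- The word length of `g` with respect to a set `U` of generators: the least `n` such that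
`g` is a product of `n` elements of `U ∪ U⁻¹` (and `0` for the identity). -/
def wordLength {G : Type*} [Group G] (U : Set G) (g : G) : ℕ :=
  sInf {n : ℕ | ∃ l : List G, l.length = n ∧ (∀ a ∈ l, a ∈ U ∨ a⁻¹ ∈ U) ∧ l.prod = g}

/-- The free group on two generators. -/
abbrev F₂ := FreeGroup (Fin 2)

/-- The first free generator `x`. -/
def xg : F₂ := FreeGroup.of 0

/-- The second free generator `y`. -/
def yg : F₂ := FreeGroup.of 1

/-- The homomorphism `φ : F₂ → ℤ` with `φ(x) = φ(y) = 1`. -/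
def φ : F₂ →* Multiplicative ℤ := FreeGroup.lift fun _ => Multiplicative.ofAdd 1

/-- The homomorphism `ψ(h₁, h₂) = φ(h₁) − φ(h₂)`, whose kernel is the fiber product
`Γ = {(h₁, h₂) : φ(h₁) = φ(h₂)}`. -/
def ψ : F₂ × F₂ →* Multiplicative ℤ :=
  (φ.comp (MonoidHom.fst F₂ F₂)) / (φ.comp (MonoidHom.snd F₂ F₂))

/-- The standard generating set `S = {(x,1), (y,1), (1,x), (1,y)}` of `F₂ × F₂`. -/
def Sgen : Set (F₂ × F₂) := {(xg, 1), (yg, 1), (1, xg), (1, yg)}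

/-- The set `T = {(x,x), (y,x), (x,y)}`. -/
def Tgen : Set (F₂ × F₂) := {(xg, xg), (yg, xg), (xg, yg)}

open Subgroup (closure subset_closure)

section WordLength

variable {G H : Type*} [Group G] [Group H] {U : Set G} {V : Set H}

theorem mem_closure_of_mem_or_inv_mem {g : G} (hg : g ∈ U ∨ g⁻¹ ∈ U) : g ∈ closure U :=
  hg.elim (fun h => subset_closure h) fun h => by simpa using inv_mem (subset_closure h)

theorem wordLength_list_prod_le_length {l : List G} (hl : ∀ a ∈ l, a ∈ U ∨ a⁻¹ ∈ U) :
    wordLength U l.prod ≤ l.length :=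
  Nat.sInf_le ⟨l, rfl, hl, rfl⟩

theorem exists_list_of_mem_closure {g : G} (hg : g ∈ closure U) :
    ∃ l : List G, (∀ a ∈ l, a ∈ U ∨ a⁻¹ ∈ U) ∧ l.prod = g := by
  rw [← Subgroup.mem_toSubmonoid, Subgroup.closure_toSubmonoid] at hg
  obtain ⟨l, hl, rfl⟩ := Submonoid.exists_list_of_mem_closure hg
  exact ⟨l, fun a ha => (hl a ha).imp id Set.mem_inv.1, rfl⟩

theorem exists_list_length_eq_wordLength {g : G} (hg : g ∈ closure U) :
    ∃ l : List G, (∀ a ∈ l, a ∈ U ∨ a⁻¹ ∈ U) ∧ l.prod = g ∧ l.length = wordLength U g := by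
  obtain ⟨l, hl, hprod⟩ := exists_list_of_mem_closure hg
  obtain ⟨l', hlen, hl', hprod'⟩ :=
    Nat.sInf_mem (s := {n | ∃ l : List G, l.length = n ∧ (∀ a ∈ l, a ∈ U ∨ a⁻¹ ∈ U) ∧
      l.prod = g}) ⟨l.length, l, rfl, hl, hprod⟩
  exact ⟨l', hl', hprod', hlen⟩

theorem mem_closure_and_wordLength_le_one {g : G} (hg : g = 1 ∨ g ∈ U ∨ g⁻¹ ∈ U) :
    g ∈ closure U ∧ wordLength U g ≤ 1 := by
  rcases hg with rfl | hg
  · exact ⟨one_mem _, (wordLength_list_prod_le_length (l := []) (by simp)).trans zero_le_one⟩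
  · exact ⟨mem_closure_of_mem_or_inv_mem hg,
      by simpa using wordLength_list_prod_le_length (l := [g]) (by simpa using hg)⟩

theorem wordLength_mul_le {g h : G} (hg : g ∈ closure U) (hh : h ∈ closure U) :
    wordLength U (g * h) ≤ wordLength U g + wordLength U h := by
  obtain ⟨l, hl, rfl, hlen⟩ := exists_list_length_eq_wordLength hg
  obtain ⟨l', hl', rfl, hlen'⟩ := exists_list_length_eq_wordLength hh
  rw [← List.prod_append, ← hlen, ← hlen', ← List.length_append]
  exact wordLength_list_prod_le_length fun a ha => (List.mem_append.1 ha).elim (hl a) (hl' a)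

theorem wordLength_inv_le {g : G} (hg : g ∈ closure U) : wordLength U g⁻¹ ≤ wordLength U g := by
  obtain ⟨l, hl, rfl, hlen⟩ := exists_list_length_eq_wordLength hg
  rw [List.prod_inv_reverse, ← hlen, ← List.length_map (f := (·⁻¹)), ← List.length_reverse]
  refine wordLength_list_prod_le_length fun a ha => ?_
  obtain ⟨b, hb, rfl⟩ := List.mem_map.1 (List.mem_reverse.1 ha)
  simpa [or_comm] using hl b hb

theorem wordLength_map_le {f : G →* H} {K : ℕ}
    (hf : ∀ u ∈ U, f u ∈ closure V ∧ wordLength V (f u) ≤ K) {g : G} (hg : g ∈ closure U) :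
    f g ∈ closure V ∧ wordLength V (f g) ≤ K * wordLength U g := by
  have hmaps : ∀ g ∈ closure U, f g ∈ closure V := fun g hg =>
    (Subgroup.closure_le ((closure V).comap f)).2 (fun u hu => (hf u hu).1) hg
  refine ⟨hmaps g hg, ?_⟩
  obtain ⟨l, hl, rfl, hlen⟩ := exists_list_length_eq_wordLength hg
  rw [← hlen]
  clear hlen hg
  induction l with
  | nil => simpa using wordLength_list_prod_le_length (U := V) (l := []) (by simp)
  | cons a l ih =>
    have hl' : ∀ b ∈ l, b ∈ U ∨ b⁻¹ ∈ U := fun b hb => hl b (List.mem_cons_of_mem _ hb)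
    have hletter : wordLength V (f a) ≤ K := by
      rcases hl a List.mem_cons_self with ha | ha
      · exact (hf a ha).2
      · simpa using (wordLength_inv_le (hf _ ha).1).trans (hf _ ha).2
    have hprod : l.prod ∈ closure U :=
      list_prod_mem fun b hb => mem_closure_of_mem_or_inv_mem (hl' b hb)
    calc wordLength V (f (a :: l).prod)
        ≤ wordLength V (f a) + wordLength V (f l.prod) := by
          rw [List.prod_cons, map_mul]
          exact wordLength_mul_le
            (hmaps a (mem_closure_of_mem_or_inv_mem (hl a List.mem_cons_self))) (hmaps _ hprod)
      _ ≤ K * (a :: l).length := by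
          rw [List.length_cons, mul_add_one, add_comm (K * _)]
          exact add_le_add hletter (ih hl')

end WordLength

theorem φ_xg : φ xg = Multiplicative.ofAdd 1 := FreeGroup.lift_apply_of
theorem φ_yg : φ yg = Multiplicative.ofAdd 1 := FreeGroup.lift_apply_of

theorem mem_ker_ψ_iff {γ : F₂ × F₂} : γ ∈ ψ.ker ↔ φ γ.1 = φ γ.2 := by
  rw [MonoidHom.mem_ker, ψ, MonoidHom.div_apply, div_eq_one]
  rfl

theorem Tgen_subset_ker_ψ : Tgen ⊆ ψ.ker := by
  rintro γ (rfl | rfl | rfl) <;> rw [SetLike.mem_coe, mem_ker_ψ_iff] <;> simp [φ_xg, φ_yg]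

theorem closure_Sgen : closure Sgen = ⊤ := by
  have hmap : ∀ e : F₂ →* F₂ × F₂, (∀ i, e (FreeGroup.of i) ∈ Sgen) → ∀ a, e a ∈ closure Sgen :=
    fun e he a => (Subgroup.closure_le ((closure Sgen).comap e)).2
      (by rintro _ ⟨i, rfl⟩; exact subset_closure (he i))
      (FreeGroup.closure_range_of _ ▸ Subgroup.mem_top a)
  have hinl := hmap (MonoidHom.inl F₂ F₂) (by intro i; fin_cases i <;> simp [Sgen, xg, yg])
  have hinr := hmap (MonoidHom.inr F₂ F₂) (by intro i; fin_cases i <;> simp [Sgen, xg, yg])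
  refine eq_top_iff.2 fun γ _ => ?_
  simpa using mul_mem (hinl γ.1) (hinr γ.2)

def xPowφ : F₂ →* F₂ := (zpowersHom F₂ xg).comp φ

def graphFst : F₂ × F₂ →* F₂ × F₂ := ((MonoidHom.id F₂).prod xPowφ).comp (MonoidHom.fst F₂ F₂)

def graphSnd : F₂ × F₂ →* F₂ × F₂ := (xPowφ.prod (MonoidHom.id F₂)).comp (MonoidHom.snd F₂ F₂)

def diagShift : F₂ × F₂ →* F₂ × F₂ :=
  (zpowersHom (F₂ × F₂) (xg, xg)⁻¹).comp (φ.comp (MonoidHom.fst F₂ F₂))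

theorem graphFst_mul_diagShift_mul_graphSnd {γ : F₂ × F₂} (hγ : γ ∈ ψ.ker) :
    graphFst γ * diagShift γ * graphSnd γ = γ := by
  rw [mem_ker_ψ_iff] at hγ
  simp [graphFst, graphSnd, diagShift, xPowφ, hγ]

theorem mem_closure_Tgen_and_wordLength_le_one_of_mem_Sgen {f : F₂ × F₂ →* F₂ × F₂}
    (hf : f = graphFst ∨ f = diagShift ∨ f = graphSnd) {s : F₂ × F₂} (hs : s ∈ Sgen) :
    f s ∈ closure Tgen ∧ wordLength Tgen (f s) ≤ 1 := by
  apply mem_closure_and_wordLength_le_one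
  rcases hf with rfl | rfl | rfl <;> rcases hs with rfl | rfl | rfl | rfl <;>
    simp [graphFst, graphSnd, diagShift, xPowφ, φ_xg, φ_yg, Tgen]

theorem mem_closure_Tgen_and_wordLength_le {γ : F₂ × F₂} (hγ : γ ∈ ψ.ker) :
    γ ∈ closure Tgen ∧ wordLength Tgen γ ≤ 3 * wordLength Sgen γ := by
  have hpiece : ∀ f : F₂ × F₂ →* F₂ × F₂, (f = graphFst ∨ f = diagShift ∨ f = graphSnd) →
      f γ ∈ closure Tgen ∧ wordLength Tgen (f γ) ≤ wordLength Sgen γ := fun f hf => by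
    simpa using wordLength_map_le
      (fun s hs => mem_closure_Tgen_and_wordLength_le_one_of_mem_Sgen hf hs)
      (closure_Sgen ▸ Subgroup.mem_top γ)
  obtain ⟨h₁, hℓ₁⟩ := hpiece graphFst (by simp)
  obtain ⟨h₂, hℓ₂⟩ := hpiece diagShift (by simp)
  obtain ⟨h₃, hℓ₃⟩ := hpiece graphSnd (by simp)
  have hdecomp := graphFst_mul_diagShift_mul_graphSnd hγ
  refine ⟨hdecomp ▸ mul_mem (mul_mem h₁ h₂) h₃, ?_⟩
  calc wordLength Tgen γ = wordLength Tgen (graphFst γ * diagShift γ * graphSnd γ) := by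
        rw [hdecomp]
    _ ≤ wordLength Tgen (graphFst γ * diagShift γ) + wordLength Tgen (graphSnd γ) :=
        wordLength_mul_le (mul_mem h₁ h₂) h₃
    _ ≤ wordLength Tgen (graphFst γ) + wordLength Tgen (diagShift γ) +
          wordLength Tgen (graphSnd γ) := by
        gcongr
        exact wordLength_mul_le h₁ h₂
    _ ≤ 3 * wordLength Sgen γ := by omega

/-- `T` generates `Γ = ker ψ`, and `Γ` is undistorted in `F₂ × F₂`: there is a constant
`C > 0` with `ℓ_T(γ) ≤ C · ℓ_S(γ)` for every `γ ∈ Γ`. -/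
theorem fiber_product_generated_by_T_and_undistorted :
    Subgroup.closure Tgen = ψ.ker ∧
    ∃ C : ℕ, 0 < C ∧ ∀ γ ∈ ψ.ker, wordLength Tgen γ ≤ C * wordLength Sgen γ :=
  ⟨le_antisymm ((Subgroup.closure_le _).2 Tgen_subset_ker_ψ)
      fun _ hγ => (mem_closure_Tgen_and_wordLength_le hγ).1,
    3, three_pos, fun _ hγ => (mem_closure_Tgen_and_wordLength_le hγ).2⟩
end
end

section
/- Let V be a finite-dimensional real inner product space, R ⊆ V ∖ {0} a root system spanning V, W the finite group generated by the reflections s_β for β ∈ R, Δ ⊆ R a system of simple roots and C = {v ∈ V : ⟨v, α⟩ ≥ 0 for all α ∈ Δ} the closed fundamental Weyl chamber. Then for every u ∈ C, the star St(u) := ⋃ { wC : w ∈ W, u ∈ wC } equals the set {v ∈ V : ⟨v, β⟩ ≥ 0 for every root β ∈ R with ⟨u, β⟩ > 0}, i.e. the intersection of the closed half-spaces determined by roots whose half-space contains u in its interior. In particular, St(u) is a convex cone. -/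
/-!
Fix `d` with `⟪d, αᵢ⟫ = 1` for every simple root `αᵢ`. Since `W` is finite, among the chambers
`wC` containing `v` one may choose `w` maximizing `⟪u, w d⟫`. If a wall `w αᵢ` of `wC` separated it
from `u`, i.e. `⟪u, w αᵢ⟫ < 0`, the half-space condition for the root `-w αᵢ` would force
`⟪v, w αᵢ⟫ = 0`; then the reflected chamber `s_{w αᵢ} w C` would still contain `v`, with a
larger value of `⟪u, · d⟫`. Hence `u, v ∈ wC`. Conversely, if `u, v ∈ wC` and `⟪u, β⟫ > 0` for a root `β`,
then the root `w⁻¹β` is positive somewhere on `C`, so it is a nonnegative combination of simple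
roots and is nonnegative on all of `C`, in particular at `w⁻¹v`.
-/

open scoped InnerProductSpace

noncomputable section

/-- The orthogonal reflection of `V` in the hyperplane `β ⊥`. -/
def rootRefl {V : Type*} [NormedAddCommGroup V] [InnerProductSpace ℝ V]
    [FiniteDimensional ℝ V] (β : V) : V ≃ₗᵢ[ℝ] V :=
  Submodule.reflection (Submodule.span ℝ {β})ᗮ

section

variable {V : Type*} [NormedAddCommGroup V] [InnerProductSpace ℝ V] {ι : Type*}

theorem finite_of_forall_mapsTo {R : Set V} (hRfin : R.Finite)
    (hRspan : Submodule.span ℝ R = ⊤) (G : Subgroup (V ≃ₗᵢ[ℝ] V))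
    (hG : ∀ w ∈ G, Set.MapsTo w R R) : (G : Set (V ≃ₗᵢ[ℝ] V)).Finite := by
  have : Finite R := hRfin.to_subtype
  refine Set.Finite.of_injOn (f := fun w (β : R) => w β) (t := Set.univ.pi fun _ => R)
    (fun w hw β _ => hG w hw β.2) (fun w₁ _ w₂ _ h => ?_) (Set.Finite.pi fun _ => hRfin)
  have := LinearMap.ext_on hRspan (f := w₁.toLinearMap) (g := w₂.toLinearMap)
    fun β hβ => congrFun h ⟨β, hβ⟩
  exact LinearIsometryEquiv.toLinearEquiv_injective (LinearEquiv.toLinearMap_injective this)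

def weylChamber (b : Module.Basis ι ℝ V) : Set V := {v | ∀ i, 0 ≤ ⟪v, b i⟫_ℝ}

theorem mem_image_weylChamber_iff (b : Module.Basis ι ℝ V) (w : V ≃ₗᵢ[ℝ] V) (x : V) :
    x ∈ w '' weylChamber b ↔ ∀ i, 0 ≤ ⟪x, w (b i)⟫_ℝ := by
  simp only [w.image_eq_preimage_symm, Set.mem_preimage, weylChamber, Set.mem_ofPred_eq,
    w.symm.inner_map_eq_flip, LinearIsometryEquiv.symm_symm]

theorem inner_nonneg_of_repr_nonneg [Fintype ι] {b : Module.Basis ι ℝ V} {γ v : V}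
    (hγ : ∀ i, 0 ≤ b.repr γ i) (hv : v ∈ weylChamber b) : 0 ≤ ⟪v, γ⟫_ℝ := by
  rw [← b.sum_repr γ, inner_sum]
  exact Finset.sum_nonneg fun i _ => by rw [real_inner_smul_right]; exact mul_nonneg (hγ i) (hv i)

theorem inner_nonneg_of_mem_weylChamber_of_inner_pos [Fintype ι] {b : Module.Basis ι ℝ V}
    {γ u v : V} (hγ : (∀ i, 0 ≤ b.repr γ i) ∨ (∀ i, b.repr γ i ≤ 0)) (hu : u ∈ weylChamber b)
    (hpos : 0 < ⟪u, γ⟫_ℝ) (hv : v ∈ weylChamber b) : 0 ≤ ⟪v, γ⟫_ℝ := by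
  refine hγ.elim (fun h => inner_nonneg_of_repr_nonneg h hv) fun h => ?_
  have := inner_nonneg_of_repr_nonneg (γ := -γ) (fun i => by simpa using h i) hu
  rw [inner_neg_right] at this
  linarith

theorem convex_setOf_inner_nonneg_of_inner_pos (R : Set V) (u : V) :
    Convex ℝ {v : V | ∀ β ∈ R, 0 < ⟪u, β⟫_ℝ → 0 ≤ ⟪v, β⟫_ℝ} := by
  intro x hx y hy s t hs ht _ β hβ hpos
  rw [inner_add_left, real_inner_smul_left, real_inner_smul_left]
  have := hx β hβ hpos
  have := hy β hβ hpos
  positivity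

theorem smul_mem_setOf_inner_nonneg_of_inner_pos (R : Set V) (u : V) {t : ℝ} (ht : 0 ≤ t) {v : V}
    (hv : v ∈ {v : V | ∀ β ∈ R, 0 < ⟪u, β⟫_ℝ → 0 ≤ ⟪v, β⟫_ℝ}) :
    t • v ∈ {v : V | ∀ β ∈ R, 0 < ⟪u, β⟫_ℝ → 0 ≤ ⟪v, β⟫_ℝ} := fun β hβ hpos => by
  rw [real_inner_smul_left]
  exact mul_nonneg ht (hv β hβ hpos)

variable [FiniteDimensional ℝ V]

theorem rootRefl_apply (β x : V) : rootRefl β x = x - (2 * ⟪β, x⟫_ℝ / ‖β‖ ^ 2) • β := by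
  rw [rootRefl, Submodule.reflection_orthogonal_apply, Submodule.reflection_apply,
    Submodule.starProjection_singleton]
  simp only [RCLike.ofReal_real_eq_id, id]
  module

theorem rootRefl_self (β : V) : rootRefl β β = -β :=
  Submodule.reflection_orthogonalComplement_singleton_eq_neg β

theorem rootRefl_eq_self_of_inner_eq_zero {β x : V} (h : ⟪x, β⟫_ℝ = 0) : rootRefl β x = x :=
  Submodule.reflection_mem_subspace_eq_self <|
    (Submodule.mem_orthogonal_singleton_iff_inner_left).2 h

theorem inner_lt_inner_rootRefl {β x y : V} (hy : 0 < ⟪β, y⟫_ℝ) (hx : ⟪x, β⟫_ℝ < 0) :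
    ⟪x, y⟫_ℝ < ⟪x, rootRefl β y⟫_ℝ := by
  have hβ : 0 < ‖β‖ ^ 2 := by
    have : β ≠ 0 := by rintro rfl; simp at hx
    positivity
  rw [rootRefl_apply, inner_sub_right, real_inner_smul_right]
  have : 0 < 2 * ⟪β, y⟫_ℝ / ‖β‖ ^ 2 := by positivity
  nlinarith

theorem Module.Basis.exists_inner_eq_one (b : Module.Basis ι ℝ V) :
    ∃ d : V, ∀ i, ⟪d, b i⟫_ℝ = 1 :=
  ⟨(InnerProductSpace.toDual ℝ V).symm (LinearMap.toContinuousLinearMap b.sumCoords),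
    fun i => by simp⟩

def reflectionGroup (R : Set V) : Subgroup (V ≃ₗᵢ[ℝ] V) :=
  Subgroup.closure {w | ∃ β ∈ R, w = rootRefl β}

theorem rootRefl_mem_reflectionGroup {R : Set V} {β : V} (hβ : β ∈ R) :
    rootRefl β ∈ reflectionGroup R :=
  Subgroup.subset_closure ⟨β, hβ, rfl⟩

theorem mapsTo_of_mem_reflectionGroup {R : Set V} (hR : ∀ β ∈ R, ∀ α ∈ R, rootRefl β α ∈ R)
    {w : V ≃ₗᵢ[ℝ] V} (hw : w ∈ reflectionGroup R) : Set.MapsTo w R R := by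
  induction hw using Subgroup.closure_induction'' with
  | mem _ hx | inv_mem _ hx =>
    obtain ⟨β, hβ, rfl⟩ := hx
    exact hR β hβ
  | one => exact Set.mapsTo_id R
  | mul _ _ _ _ hx hy => exact hx.comp hy

variable {b : Module.Basis ι ℝ V} {R : Set V} {d : V}

/-- Reflecting `w C` in a wall separating it from `x` strictly increases `⟪x, w d⟫`, so a
chamber maximizing it contains `x`. -/
theorem mem_image_weylChamber_of_inner_rootRefl_le (hd : ∀ i, ⟪d, b i⟫_ℝ = 1)
    {w : V ≃ₗᵢ[ℝ] V} {x : V}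
    (h : ∀ i, ⟪x, w (b i)⟫_ℝ < 0 → ⟪x, rootRefl (w (b i)) (w d)⟫_ℝ ≤ ⟪x, w d⟫_ℝ) :
    x ∈ w '' weylChamber b := by
  refine (mem_image_weylChamber_iff b w x).2 fun i => not_lt.1 fun hneg => ?_
  have hpos : 0 < ⟪w (b i), w d⟫_ℝ := by rw [w.inner_map_map, real_inner_comm, hd]; exact one_pos
  exact (h i hneg).not_gt (inner_lt_inner_rootRefl hpos hneg)

theorem exists_mem_image_weylChamber (hd : ∀ i, ⟪d, b i⟫_ℝ = 1) {S : Set (V ≃ₗᵢ[ℝ] V)}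
    (hSfin : S.Finite) (hSne : S.Nonempty) {x : V}
    (hS : ∀ w ∈ S, ∀ i, ⟪x, w (b i)⟫_ℝ < 0 → rootRefl (w (b i)) * w ∈ S) :
    ∃ w ∈ S, x ∈ w '' weylChamber b := by
  obtain ⟨w, hw, hmax⟩ := Set.exists_max_image S (fun w => ⟪x, w d⟫_ℝ) hSfin hSne
  exact ⟨w, hw, mem_image_weylChamber_of_inner_rootRefl_le hd fun i hi => hmax _ (hS w hw i hi)⟩

theorem finite_reflectionGroup (hRfin : R.Finite) (hRspan : Submodule.span ℝ R = ⊤)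
    (hRrefl : ∀ β ∈ R, ∀ α ∈ R, rootRefl β α ∈ R) :
    (reflectionGroup R : Set (V ≃ₗᵢ[ℝ] V)).Finite :=
  finite_of_forall_mapsTo hRfin hRspan _ fun _ => mapsTo_of_mem_reflectionGroup hRrefl

theorem exists_mem_reflectionGroup_mem_image_weylChamber (hRfin : R.Finite)
    (hRspan : Submodule.span ℝ R = ⊤) (hRrefl : ∀ β ∈ R, ∀ α ∈ R, rootRefl β α ∈ R)
    (hΔR : ∀ i, b i ∈ R) (x : V) :
    ∃ w ∈ reflectionGroup R, x ∈ w '' weylChamber b := by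
  obtain ⟨d, hd⟩ := b.exists_inner_eq_one
  refine exists_mem_image_weylChamber hd (finite_reflectionGroup hRfin hRspan hRrefl)
    ⟨1, one_mem _⟩ fun w hw i _ => mul_mem (rootRefl_mem_reflectionGroup ?_) hw
  exact mapsTo_of_mem_reflectionGroup hRrefl hw (hΔR i)

theorem exists_mem_reflectionGroup_mem_image_weylChamber_of_inner_nonneg (hRfin : R.Finite)
    (hRspan : Submodule.span ℝ R = ⊤) (hRrefl : ∀ β ∈ R, ∀ α ∈ R, rootRefl β α ∈ R)
    (hΔR : ∀ i, b i ∈ R) {u v : V} (hv : ∀ β ∈ R, 0 < ⟪u, β⟫_ℝ → 0 ≤ ⟪v, β⟫_ℝ) :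
    ∃ w ∈ reflectionGroup R, u ∈ w '' weylChamber b ∧ v ∈ w '' weylChamber b := by
  obtain ⟨d, hd⟩ := b.exists_inner_eq_one
  set S := {w | w ∈ reflectionGroup R ∧ v ∈ w '' weylChamber b}
  have hSfin : S.Finite := (finite_reflectionGroup hRfin hRspan hRrefl).subset fun _ h => h.1
  have hSne : S.Nonempty :=
    exists_mem_reflectionGroup_mem_image_weylChamber hRfin hRspan hRrefl hΔR v
  suffices hS : ∀ w ∈ S, ∀ i, ⟪u, w (b i)⟫_ℝ < 0 → rootRefl (w (b i)) * w ∈ S by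
    obtain ⟨w, ⟨hw, hvw⟩, huw⟩ := exists_mem_image_weylChamber hd hSfin hSne hS
    exact ⟨w, hw, huw, hvw⟩
  rintro w ⟨hw, hvw⟩ i hneg
  set β := w (b i)
  have hβ : β ∈ R := mapsTo_of_mem_reflectionGroup hRrefl hw (hΔR i)
  have hvβ : ⟪v, β⟫_ℝ = 0 := by
    have hneg' := hv (-β) (rootRefl_self β ▸ hRrefl β hβ β hβ)
      (by rw [inner_neg_right]; linarith)
    rw [inner_neg_right] at hneg'
    exact le_antisymm (by linarith) ((mem_image_weylChamber_iff b w v).1 hvw i)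
  refine ⟨mul_mem (rootRefl_mem_reflectionGroup hβ) hw, ?_⟩
  rw [LinearIsometryEquiv.coe_mul, Set.image_comp, ← rootRefl_eq_self_of_inner_eq_zero hvβ]
  exact Set.mem_image_of_mem _ hvw

theorem inner_nonneg_of_mem_image_weylChamber [Fintype ι]
    (hRrefl : ∀ β ∈ R, ∀ α ∈ R, rootRefl β α ∈ R)
    (hsimple : ∀ β ∈ R, (∀ i, 0 ≤ b.repr β i) ∨ (∀ i, b.repr β i ≤ 0))
    {w : V ≃ₗᵢ[ℝ] V} (hw : w ∈ reflectionGroup R) {u v β : V}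
    (hu : u ∈ w '' weylChamber b) (hv : v ∈ w '' weylChamber b) (hβ : β ∈ R)
    (hpos : 0 < ⟪u, β⟫_ℝ) : 0 ≤ ⟪v, β⟫_ℝ := by
  obtain ⟨u, hu, rfl⟩ := hu
  obtain ⟨v, hv, rfl⟩ := hv
  rw [w.inner_map_eq_flip] at hpos ⊢
  exact inner_nonneg_of_mem_weylChamber_of_inner_pos
    (hsimple _ (mapsTo_of_mem_reflectionGroup hRrefl (inv_mem hw) hβ)) hu hpos hv

end

theorem star_eq_intersection_of_root_halfspaces_general
    {V : Type*} [NormedAddCommGroup V] [InnerProductSpace ℝ V] [FiniteDimensional ℝ V]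
    {ι : Type*}
    (R : Set V) (hRfin : R.Finite)
    (hRspan : Submodule.span ℝ R = ⊤)
    (hRrefl : ∀ β ∈ R, ∀ α ∈ R, rootRefl β α ∈ R)
    (b : Module.Basis ι ℝ V) (hΔR : ∀ i, b i ∈ R)
    (hsimple : ∀ β ∈ R, (∀ i, 0 ≤ b.repr β i) ∨ (∀ i, b.repr β i ≤ 0))
    (W : Subgroup (V ≃ₗᵢ[ℝ] V))
    (hW : W = Subgroup.closure {w : V ≃ₗᵢ[ℝ] V | ∃ β ∈ R, w = rootRefl β})
    (C : Set V) (hC : C = {v : V | ∀ i, 0 ≤ ⟪v, b i⟫_ℝ}) :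
    ∀ u ∈ C,
      {v : V | ∃ w ∈ W, u ∈ ⇑w '' C ∧ v ∈ ⇑w '' C}
          = {v : V | ∀ β ∈ R, 0 < ⟪u, β⟫_ℝ → 0 ≤ ⟪v, β⟫_ℝ} ∧
      Convex ℝ {v : V | ∃ w ∈ W, u ∈ ⇑w '' C ∧ v ∈ ⇑w '' C} ∧
      ∀ t : ℝ, 0 ≤ t → ∀ v ∈ {v : V | ∃ w ∈ W, u ∈ ⇑w '' C ∧ v ∈ ⇑w '' C},
        t • v ∈ {v : V | ∃ w ∈ W, u ∈ ⇑w '' C ∧ v ∈ ⇑w '' C} := by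
  obtain rfl : W = reflectionGroup R := hW
  obtain rfl : C = weylChamber b := hC
  have : Fintype ι := FiniteDimensional.fintypeBasisIndex b
  intro u _
  have hstar : {v | ∃ w ∈ reflectionGroup R, u ∈ w '' weylChamber b ∧ v ∈ w '' weylChamber b}
      = {v | ∀ β ∈ R, 0 < ⟪u, β⟫_ℝ → 0 ≤ ⟪v, β⟫_ℝ} :=
    Set.ext fun v => ⟨fun ⟨w, hw, huw, hvw⟩ β hβ hpos =>
      inner_nonneg_of_mem_image_weylChamber hRrefl hsimple hw huw hvw hβ hpos,
      exists_mem_reflectionGroup_mem_image_weylChamber_of_inner_nonneg hRfin hRspan hRrefl hΔR⟩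
  rw [hstar]
  exact ⟨rfl, convex_setOf_inner_nonneg_of_inner_pos R u,
    fun t ht v => smul_mem_setOf_inner_nonneg_of_inner_pos R u ht⟩

/-- Let `R` be a root system spanning `V`, `W` the group generated by the reflections in the
roots, `Δ ⊆ R` a system of simple roots (realized as a basis `b` all of whose members are
roots, such that every root has coordinates all `≥ 0` or all `≤ 0`), and
`C = {v : ⟨v, α⟩ ≥ 0 ∀ α ∈ Δ}` the closed fundamental Weyl chamber. Then for every `u ∈ C`,
the star `St(u) = ⋃ {wC : w ∈ W, u ∈ wC}` equals
`{v : ⟨v, β⟩ ≥ 0 for every root β with ⟨u, β⟩ > 0}`; in particular `St(u)` is a convex cone. -/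
theorem star_eq_intersection_of_root_halfspaces
    {V : Type*} [NormedAddCommGroup V] [InnerProductSpace ℝ V] [FiniteDimensional ℝ V]
    {ι : Type*} [Fintype ι]
    (R : Set V) (hRfin : R.Finite) (hR0 : (0 : V) ∉ R)
    (hRspan : Submodule.span ℝ R = ⊤)
    (hRrefl : ∀ β ∈ R, ∀ α ∈ R, rootRefl β α ∈ R)
    (b : Module.Basis ι ℝ V) (hΔR : ∀ i, b i ∈ R)
    (hsimple : ∀ β ∈ R, (∀ i, 0 ≤ b.repr β i) ∨ (∀ i, b.repr β i ≤ 0))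
    (W : Subgroup (V ≃ₗᵢ[ℝ] V))
    (hW : W = Subgroup.closure {w : V ≃ₗᵢ[ℝ] V | ∃ β ∈ R, w = rootRefl β})
    (C : Set V) (hC : C = {v : V | ∀ i, 0 ≤ ⟪v, b i⟫_ℝ}) :
    ∀ u ∈ C,
      {v : V | ∃ w ∈ W, u ∈ ⇑w '' C ∧ v ∈ ⇑w '' C}
          = {v : V | ∀ β ∈ R, 0 < ⟪u, β⟫_ℝ → 0 ≤ ⟪v, β⟫_ℝ} ∧
      Convex ℝ {v : V | ∃ w ∈ W, u ∈ ⇑w '' C ∧ v ∈ ⇑w '' C} ∧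
      ∀ t : ℝ, 0 ≤ t → ∀ v ∈ {v : V | ∃ w ∈ W, u ∈ ⇑w '' C ∧ v ∈ ⇑w '' C},
        t • v ∈ {v : V | ∃ w ∈ W, u ∈ ⇑w '' C ∧ v ∈ ⇑w '' C} :=
  star_eq_intersection_of_root_halfspaces_general R hRfin hRspan hRrefl b hΔR hsimple W hW C hC
end
end
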